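/- Let χ ∈ W have lowest index m. Then for every n ∈ {m+2, m+4, m+6, …}, the function χ_n vanishes outside F_n × ℝ³ (its support is contained in F_n × ℝ³). -/

import Mathlib

/-!
In `k ∈ E_n` the last momentum is astronomically large compared with `p_n` of the others,
while every `|k_i|` is below `exp (p/2)` for any `p` built from a tuple containing `k_i`.
Hence a tuple of `F_{n+1}` has one dominant entry whose removal leaves a tuple outside `F_n`, and
no entry can be removed so as to land in `F_n`: the dominant entry of the shorter tuple would
have to be the old one (impossible since `p` at least doubles when a factor comes back) or a
different one (impossible since two entries cannot dominate each other). By induction along the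
recursion for `χ`, each summand of `χ_n` carries `1_{E_n} 1_{D_{n-1}^∁}` and a factor `χ_{n-2}`
evaluated at a tuple with one momentum removed, so it vanishes off `F_n × ℝ³`.
-/

open MeasureTheory ENNReal

noncomputable section

/-- Momentum space `ℝ³`. -/
abbrev R3 : Type := EuclideanSpace ℝ (Fin 3)

/-- `pfun k = p_{n+1}(k₁,…,k_n) = e^{n+1} ∏_{i=1}^{n} (|k_i|² + 1)²` for `k : Fin n → ℝ³`. -/
def pfun {n : ℕ} (k : Fin n → R3) : ℝ :=
  Real.exp (n + 1) * ∏ i, (‖k i‖ ^ 2 + 1) ^ 2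

/-- `Eset n = E_{n+1} ⊆ (ℝ³)^{n+1}`:
`exp(p_{n+1}(k₁,…,k_n)/2) < |k_{n+1}| < exp(p_{n+1}(k₁,…,k_n))`. -/
def Eset (n : ℕ) : Set (Fin (n + 1) → R3) :=
  {k | Real.exp (pfun (fun i : Fin n => k i.castSucc) / 2) < ‖k (Fin.last n)‖ ∧
       ‖k (Fin.last n)‖ < Real.exp (pfun (fun i : Fin n => k i.castSucc))}

/-- The symmetrizer `𝒮` on subsets of `(ℝ³)^n`: all tuples having a permutation in `X`. -/
def symmSet {n : ℕ} (X : Set (Fin n → R3)) : Set (Fin n → R3) :=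
  {k | ∃ σ : Equiv.Perm (Fin n), (k ∘ σ) ∈ X}

/-- `extendSet X = X × ℝ³ ⊆ (ℝ³)^{n+1}` for `X ⊆ (ℝ³)^n`. -/
def extendSet {n : ℕ} (X : Set (Fin n → R3)) : Set (Fin (n + 1) → R3) :=
  {k | (fun i : Fin n => k i.castSucc) ∈ X}

/-- `Fset n = F_{n+1}`: `F₁ = ∅`, `F_{n} = 𝒮((F_{n−1}^∁ × ℝ³) ∩ E_n)`. -/
def Fset : (n : ℕ) → Set (Fin (n + 1) → R3)
  | 0 => ∅
  | n + 1 => symmSet (extendSet (Fset n)ᶜ ∩ Eset (n + 1))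

/-- A representative of a vector of the Fock space: component `n` is a function of
`(k₁,…,k_n; p)`, i.e. of `n + 1` points of `ℝ³`. -/
abbrev FockRep : Type := (n : ℕ) → (Fin (n + 1) → R3) → ℂ

/-- Remove the `i`-th entry of a tuple. -/
def removeAt {n : ℕ} (i : Fin (n + 1)) (f : Fin (n + 1) → R3) : Fin n → R3 :=
  fun j => f (i.succAbove j)

/-- `Â⁺_m` : `(Â⁺_m ψ)(k₁,…,k_{m+1};p) = (m+1)^{-1/2} ∑_i |k_i|^{-1/2} ψ(…,k̂_i,…; p + k_i)`. -/
def Aplus (m : ℕ) (ψ : (Fin (m + 1) → R3) → ℂ) : (Fin (m + 2) → R3) → ℂ :=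
  fun x =>
    (Real.sqrt (m + 1) : ℂ)⁻¹ *
      ∑ i : Fin (m + 1),
        (Real.sqrt ‖x i.castSucc‖ : ℂ)⁻¹ *
          ψ (Fin.snoc (removeAt i fun j : Fin (m + 1) => x j.castSucc)
              (x (Fin.last (m + 1)) + x i.castSucc))

/-- `Aminus t = Â⁻_{t+1}` : the full annihilation-type operator. -/
def Aminus (t : ℕ) (ψ : (Fin (t + 2) → R3) → ℂ) : (Fin (t + 1) → R3) → ℂ :=
  fun x =>
    (Real.sqrt (t + 1) : ℂ)⁻¹ *
      ∑ i : Fin (t + 1),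
        ∫ w : R3, (Real.sqrt ‖w‖ : ℂ)⁻¹ *
          ψ (Fin.snoc (Fin.insertNth i w fun j : Fin t => x j.castSucc)
              (x (Fin.last t) - w))

/-- `AminusL t l = Â⁻_{t+1, l}` : the single term of `Â⁻_{t+1}` where the integration
variable is inserted at position `l`. -/
def AminusL (t : ℕ) (l : Fin (t + 1)) (ψ : (Fin (t + 2) → R3) → ℂ) :
    (Fin (t + 1) → R3) → ℂ :=
  fun x =>
    (Real.sqrt (t + 1) : ℂ)⁻¹ *
      ∫ w : R3, (Real.sqrt ‖w‖ : ℂ)⁻¹ *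
        ψ (Fin.snoc (Fin.insertNth l w fun j : Fin t => x j.castSucc)
            (x (Fin.last t) - w))

/-- `Â⁻_m χ_m`, with `Â⁻₀ := 0`. -/
def AminusComp : (m : ℕ) → ((Fin (m + 1) → R3) → ℂ) → (Fin m → R3) → ℂ
  | 0, _ => 0
  | t + 1, ψ => Aminus t ψ

/-- The full (formal) operator `Â` : `(Âψ)_n = Â⁺_{n−1}ψ_{n−1} + Â⁻_{n+1}ψ_{n+1}`,
with `Â⁺_{−1} := 0`. -/
def Aop (ψ : FockRep) : FockRep := fun n =>
  match n with
  | 0 => Aminus 0 (ψ 1)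
  | n + 1 => fun x => Aplus n (ψ n) x + Aminus (n + 1) (ψ (n + 2)) x

/-- `Tset n` is the set whose indicator gives `1_T` on component `n`:
`∅` for `n = 0` and `F_n × ℝ³` for `n ≥ 1`. -/
def Tset : (n : ℕ) → Set (Fin (n + 1) → R3)
  | 0 => ∅
  | n + 1 => extendSet (Fset n)

/-- The operator `1_T`. -/
def oneT (ψ : FockRep) : FockRep := fun n => (Tset n).indicator (ψ n)

/-- The operator `1_{T^∁}`. -/
def oneTc (ψ : FockRep) : FockRep := fun n => ((Tset n)ᶜ).indicator (ψ n)

/-- The operator `Â⁺`: `(Â⁺ψ)_n = Â⁺_{n−1}ψ_{n−1}`, `(Â⁺ψ)₀ = 0`. -/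
def AplusOp (ψ : FockRep) : FockRep := fun n =>
  match n with
  | 0 => 0
  | n + 1 => Aplus n (ψ n)

/-- `‖ψ‖² = ∑_n ‖ψ_n‖²_{L²}` (in `ℝ≥0∞`). -/
def HnormSq (ψ : FockRep) : ℝ≥0∞ := ∑' n, eLpNorm (ψ n) 2 volume ^ 2

/-- Membership in the Hilbert space `H`. -/
def memH (ψ : FockRep) : Prop := (∀ n, MemLp (ψ n) 2 volume) ∧ HnormSq ψ < ⊤

/-- `‖1_T Â⁺ 1_{T^∁} ψ‖²`. -/
def VnormSq (ψ : FockRep) : ℝ≥0∞ := HnormSq (oneT (AplusOp (oneTc ψ)))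

/-- `ψ ∈ U`, i.e. `ψ ∈ H` and `Âψ ∈ H`. -/
def memU (ψ : FockRep) : Prop := memH ψ ∧ memH (Aop ψ)

/-- `ψ ∈ V`, i.e. `ψ ∈ H` and `‖1_T Â⁺ 1_{T^∁} ψ‖ < ∞`. -/
def memV (ψ : FockRep) : Prop := memH ψ ∧ VnormSq ψ < ⊤

/-- The inner product of `H` (conjugate-linear in the first argument). -/
def Hinner (φ ψ : FockRep) : ℂ := ∑' n, ∫ x, (starRingEnd ℂ) (φ n x) * ψ n x

/-- `‖φ − ψ‖²`. -/
def distSq (φ ψ : FockRep) : ℝ≥0∞ :=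
  ∑' n, eLpNorm (fun x => φ n x - ψ n x) 2 volume ^ 2

/-- `χ_{n,j}` for `n = t + 2`: the `j`-th term of the recursion formula defining members
of `W` in terms of `prev = χ_{n−2}`, with vanishing-set `Dset = D_{n−1}`. -/
def chiTerm (t : ℕ) (Dset : Set (Fin (t + 1) → R3)) (prev : (Fin (t + 1) → R3) → ℂ)
    (j : Fin (t + 1)) : (Fin (t + 3) → R3) → ℂ :=
  fun x =>
    let kk : Fin (t + 2) → R3 := fun i => x i.castSucc
    let p : R3 := x (Fin.last (t + 2))
    let kf : Fin (t + 1) → R3 := fun i => kk i.castSucc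
    let kn : R3 := kk (Fin.last (t + 1))
    (((-Real.sqrt (t + 2) * (Eset (t + 1)).indicator (fun _ => (1 : ℝ)) kk *
          Dsetᶜ.indicator (fun _ => (1 : ℝ)) kf) /
        (2 * Real.pi * Real.sqrt (t + 1) * pfun kf * Real.sqrt (‖kn‖ ^ 5)) : ℝ) : ℂ) *
      ((Real.sqrt ‖kf j‖ : ℂ)⁻¹ * prev (Fin.snoc (removeAt j kf) (p + kf j + kn)))

/-- The full recursion formula `χ_n = ∑_{j=1}^{n−1} χ_{n,j}` for `n = t + 2`. -/
def chiFormula (t : ℕ) (Dset : Set (Fin (t + 1) → R3)) (prev : (Fin (t + 1) → R3) → ℂ) :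
    (Fin (t + 3) → R3) → ℂ :=
  fun x => ∑ j : Fin (t + 1), chiTerm t Dset prev j x

/-- `χ ∈ W`, with lowest index `m` and admissible set `D = D_{m+1}`. -/
def IsW (m : ℕ) (D : Set (Fin (m + 1) → R3)) (χ : FockRep) : Prop :=
  memH χ ∧
  Fset m ⊆ D ∧ symmSet D = D ∧
  (∀ n, (¬ ∃ j : ℕ, n = m + 2 * j) → χ n = 0) ∧
  χ (m + 2) = chiFormula m D (χ m) ∧
  (∀ j : ℕ, χ (m + 2 * j + 4) = chiFormula (m + 2 * j + 2) ∅ (χ (m + 2 * j + 2))) ∧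
  MemLp (AminusComp m (χ m)) 2 volume ∧
  MemLp ((extendSet D).indicator (Aplus m (χ m))) 2 volume

/-- Membership in the linear span of `W`. -/
def inSpanW (φ : FockRep) : Prop :=
  ∃ (k : ℕ) (c : Fin k → ℂ) (χs : Fin k → FockRep),
    (∀ i, ∃ (m : ℕ) (D : Set (Fin (m + 1) → R3)), IsW m D (χs i)) ∧
    ∀ n x, φ n x = ∑ i, c i * χs i n x

/-- The shell `B_R ∖ B_{1/R} ⊆ ℝ³`. -/
def shellSet (R : ℝ) : Set R3 := {k | R⁻¹ ≤ ‖k‖ ∧ ‖k‖ < R}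

/-- `(B_R ∖ B_{1/R})^n × ℝ³` as a subset of `(ℝ³)^{n+1}`. -/
def cutSet (R : ℝ) (n : ℕ) : Set (Fin (n + 1) → R3) :=
  {x | ∀ i : Fin n, x i.castSucc ∈ shellSet R}

/-- The cut-off creation operator `Â^{R+}_m`. -/
def ARplus (R : ℝ) (m : ℕ) (ψ : (Fin (m + 1) → R3) → ℂ) : (Fin (m + 2) → R3) → ℂ :=
  (cutSet R (m + 1)).indicator (Aplus m ψ)

/-- The cut-off annihilation operator `Â^{R−}_{t+1}`. -/
def ARminus (R : ℝ) (t : ℕ) (ψ : (Fin (t + 2) → R3) → ℂ) : (Fin (t + 1) → R3) → ℂ :=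
  (cutSet R t).indicator (Aminus t ((cutSet R (t + 1)).indicator ψ))

/-- `p'_{N+1}(i₁,…,i_N) = e^{N+1} ∏_l (i_l² + 1)²`. -/
def pIdx (N : ℕ) (i : Fin N → ℕ) : ℝ :=
  Real.exp (N + 1) * ∏ l, ((i l : ℝ) ^ 2 + 1) ^ 2

/-- `X_{N,i} × ℝ³`: the product of spherical shells `i_l ≤ |k_l| < i_l + 1`
in the `k`-variables, with `p` free. -/
def Xshell (N : ℕ) (i : Fin N → ℕ) : Set (Fin (N + 1) → R3) :=
  {x | ∀ l : Fin N, (i l : ℝ) ≤ ‖x l.castSucc‖ ∧ ‖x l.castSucc‖ < (i l : ℝ) + 1}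


lemma lt_exp_half_sq_add_one_sq (a : ℝ) : a < Real.exp ((a ^ 2 + 1) ^ 2 / 2) := by
  nlinarith [Real.add_one_le_exp ((a ^ 2 + 1) ^ 2 / 2), sq_nonneg (a - 1), sq_nonneg a]

lemma pfun_pos {n : ℕ} (k : Fin n → R3) : 0 < pfun k := by
  unfold pfun
  positivity

lemma pfun_comp_perm {n : ℕ} (k : Fin n → R3) (ρ : Equiv.Perm (Fin n)) :
    pfun (k ∘ ρ) = pfun k := by
  simp only [pfun, Function.comp_apply, Equiv.prod_comp ρ fun i => (‖k i‖ ^ 2 + 1) ^ 2]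

lemma pfun_eq_exp_one_mul_mul_pfun_removeAt {n : ℕ} (k : Fin (n + 1) → R3) (i : Fin (n + 1)) :
    pfun k = Real.exp 1 * (‖k i‖ ^ 2 + 1) ^ 2 * pfun (removeAt i k) := by
  have hexp : Real.exp ((n + 1 : ℕ) + 1) = Real.exp 1 * Real.exp (n + 1) := by
    rw [← Real.exp_add]
    push_cast
    ring_nf
  simp only [pfun, removeAt, Fin.prod_univ_succAbove _ i, hexp]
  ring

lemma two_mul_pfun_removeAt_le {n : ℕ} (k : Fin (n + 1) → R3) (i : Fin (n + 1)) :
    2 * pfun (removeAt i k) ≤ pfun k := by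
  have he : 2 ≤ Real.exp 1 := by linarith [Real.add_one_le_exp 1]
  have hg : 1 ≤ (‖k i‖ ^ 2 + 1) ^ 2 := one_le_pow₀ (by nlinarith)
  have h2 : 2 ≤ Real.exp 1 * (‖k i‖ ^ 2 + 1) ^ 2 := by nlinarith
  rw [pfun_eq_exp_one_mul_mul_pfun_removeAt k i]
  exact mul_le_mul_of_nonneg_right h2 (pfun_pos _).le

lemma norm_lt_exp_half_pfun {n : ℕ} (k : Fin n → R3) (i : Fin n) :
    ‖k i‖ < Real.exp (pfun k / 2) := by
  have hg : ∀ j, 1 ≤ (‖k j‖ ^ 2 + 1) ^ 2 := fun j => one_le_pow₀ (by nlinarith)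
  have hsingle : (‖k i‖ ^ 2 + 1) ^ 2 ≤ ∏ j, (‖k j‖ ^ 2 + 1) ^ 2 := by
    simpa using Finset.prod_le_prod_of_subset_of_one_le (Finset.subset_univ {i})
      (fun j _ => zero_le_one.trans (hg j)) (fun j _ _ => hg j)
  have hprod : ∏ j, (‖k j‖ ^ 2 + 1) ^ 2 ≤ pfun k :=
    le_mul_of_one_le_left (zero_le_one.trans (Finset.one_le_prod fun j _ => hg j))
      (Real.one_le_exp (by positivity))
  calc ‖k i‖ < Real.exp ((‖k i‖ ^ 2 + 1) ^ 2 / 2) := lt_exp_half_sq_add_one_sq _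
    _ ≤ Real.exp (pfun k / 2) := Real.exp_le_exp.mpr (by linarith)

lemma norm_lt_exp_half_pfun_removeAt {n : ℕ} (k : Fin (n + 1) → R3) {i r : Fin (n + 1)}
    (hir : i ≠ r) : ‖k i‖ < Real.exp (pfun (removeAt r k) / 2) := by
  obtain ⟨a, rfl⟩ := Fin.exists_succAbove_eq hir
  exact norm_lt_exp_half_pfun (removeAt r k) a

lemma exists_perm_succAbove_eq_castSucc {n : ℕ} (σ : Equiv.Perm (Fin (n + 1))) :
    ∃ ρ : Equiv.Perm (Fin n), ∀ i, (σ (Fin.last n)).succAbove (ρ i) = σ i.castSucc := by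
  have hne : ∀ i : Fin n, σ i.castSucc ≠ σ (Fin.last n) := fun i h =>
    (Fin.castSucc_lt_last i).ne (σ.injective h)
  choose ρ hρ using fun i => Fin.exists_succAbove_eq (hne i)
  have hinj : Function.Injective ρ := fun a b hab =>
    Fin.castSucc_injective _ (σ.injective (by rw [← hρ a, ← hρ b, hab]))
  exact ⟨Equiv.ofBijective ρ (Finite.injective_iff_bijective.mp hinj), hρ⟩

lemma comp_perm_mem_Fset {n : ℕ} {k : Fin (n + 1) → R3} (hk : k ∈ Fset n)
    (ρ : Equiv.Perm (Fin (n + 1))) : k ∘ ρ ∈ Fset n := by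
  cases n with
  | zero => exact hk.elim
  | succ n =>
    obtain ⟨σ, hσ⟩ := hk
    exact ⟨σ.trans ρ.symm, by simpa [Function.comp_def] using hσ⟩

/-- `k r` plays the role of the last momentum in the definition of `E_{n+1}`. -/
def DominantAt {n : ℕ} (k : Fin (n + 1) → R3) (r : Fin (n + 1)) : Prop :=
  Real.exp (pfun (removeAt r k) / 2) < ‖k r‖ ∧ ‖k r‖ < Real.exp (pfun (removeAt r k))

lemma exists_dominantAt_of_mem_Fset_succ {n : ℕ} {k : Fin (n + 2) → R3}
    (hk : k ∈ Fset (n + 1)) : ∃ r, removeAt r k ∉ Fset n ∧ DominantAt k r := by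
  obtain ⟨σ, hσF, hσE⟩ := hk
  obtain ⟨ρ, hρ⟩ := exists_perm_succAbove_eq_castSucc σ
  have hinit : (fun i : Fin (n + 1) => (k ∘ σ) i.castSucc) = removeAt (σ (Fin.last _)) k ∘ ρ :=
    funext fun i => by simp [removeAt, hρ]
  refine ⟨σ (Fin.last _), fun h => hσF (hinit ▸ comp_perm_mem_Fset h ρ), ?_⟩
  have hpfun : pfun (fun i : Fin (n + 1) => (k ∘ σ) i.castSucc) =
      pfun (removeAt (σ (Fin.last _)) k) := by
    rw [hinit, pfun_comp_perm]
  rw [DominantAt, ← hpfun]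
  exact hσE

lemma mem_Fset_succ_of_mem_Eset {n : ℕ} {k : Fin (n + 2) → R3}
    (hinit : (fun i : Fin (n + 1) => k i.castSucc) ∉ Fset n) (hE : k ∈ Eset (n + 1)) :
    k ∈ Fset (n + 1) :=
  ⟨Equiv.refl _, hinit, hE⟩

theorem removeAt_notMem_Fset {n : ℕ} {k : Fin (n + 2) → R3} (hk : k ∈ Fset (n + 1))
    (j : Fin (n + 2)) : removeAt j k ∉ Fset n := by
  intro hj
  obtain ⟨r, hr, hkr⟩ := exists_dominantAt_of_mem_Fset_succ hk
  obtain rfl | hrj := eq_or_ne r j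
  · exact hr hj
  cases n with
  | zero => exact hj
  | succ n =>
    obtain ⟨l', -, hl'⟩ := exists_dominantAt_of_mem_Fset_succ hj
    have hl'k : removeAt j k l' = k (j.succAbove l') := rfl
    rw [DominantAt, hl'k] at hl'
    obtain hlr | hlr := eq_or_ne (j.succAbove l') r
    · -- `k r` would dominate both tuples, but `p` at least doubles when `k j` is put back
      have hswap : removeAt l' (removeAt j k) = removeAt (l'.predAbove j) (removeAt r k) :=
        hlr ▸ Fin.removeNth_removeNth_eq_swap k l' j
      have hdouble : 2 * pfun (removeAt l' (removeAt j k)) ≤ pfun (removeAt r k) :=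
        hswap ▸ two_mul_pfun_removeAt_le (removeAt r k) (l'.predAbove j)
      rw [hlr] at hl'
      have hhalf := Real.exp_lt_exp.mp (hkr.1.trans hl'.2)
      linarith
    · -- `k r` and `k (j.succAbove l')` would each dominate the other
      obtain ⟨b, rfl⟩ := Fin.exists_succAbove_eq hrj
      have hbl' : b ≠ l' := fun h => hlr (h ▸ rfl)
      have hr_small := norm_lt_exp_half_pfun_removeAt (removeAt j k) hbl'
      have hl_small := norm_lt_exp_half_pfun_removeAt k hlr
      exact lt_asymm (hkr.1.trans hr_small) (hl'.1.trans hl_small)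

lemma mem_Fset_of_notMem_Tset {t : ℕ} {x : Fin (t + 3) → R3} (hx : x ∉ Tset (t + 2))
    (hE : (fun i : Fin (t + 2) => x i.castSucc) ∈ Eset (t + 1)) :
    (fun i : Fin (t + 1) => x i.castSucc.castSucc) ∈ Fset t := by
  by_contra hF
  exact hx (mem_Fset_succ_of_mem_Eset hF hE)

lemma chiFormula_eq_zero {t : ℕ} {Dset : Set (Fin (t + 1) → R3)}
    {prev : (Fin (t + 1) → R3) → ℂ} {x : Fin (t + 3) → R3} (hx : x ∉ Tset (t + 2))
    (hprev : (fun i : Fin (t + 1) => x i.castSucc.castSucc) ∈ Fset t →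
      (fun i : Fin (t + 1) => x i.castSucc.castSucc) ∉ Dset →
      ∀ j p, prev (Fin.snoc (removeAt j fun i : Fin (t + 1) => x i.castSucc.castSucc) p) = 0) :
    chiFormula t Dset prev x = 0 := by
  refine Finset.sum_eq_zero fun j _ => ?_
  by_cases hE : (fun i : Fin (t + 2) => x i.castSucc) ∈ Eset (t + 1)
  · by_cases hD : (fun i : Fin (t + 1) => x i.castSucc.castSucc) ∈ Dset
    · simp [chiTerm, hD]
    · simp [chiTerm, hprev (mem_Fset_of_notMem_Tset hx hE) hD j]
  · simp [chiTerm, hE]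

lemma chiFormula_eq_zero_of_Fset_subset {t : ℕ} {Dset : Set (Fin (t + 1) → R3)}
    (hFD : Fset t ⊆ Dset) (prev : (Fin (t + 1) → R3) → ℂ) {x : Fin (t + 3) → R3}
    (hx : x ∉ Tset (t + 2)) : chiFormula t Dset prev x = 0 :=
  chiFormula_eq_zero hx fun hF hD => (hD (hFD hF)).elim

lemma chiFormula_eq_zero_of_eq_zero_off_Tset {t : ℕ} (Dset : Set (Fin (t + 1) → R3))
    {prev : (Fin (t + 1) → R3) → ℂ} (hprev : ∀ y ∉ Tset t, prev y = 0)
    {x : Fin (t + 3) → R3} (hx : x ∉ Tset (t + 2)) : chiFormula t Dset prev x = 0 := by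
  refine chiFormula_eq_zero hx fun hF _ j p => hprev _ ?_
  cases t with
  | zero => exact Set.notMem_empty _
  | succ t =>
    simpa only [Tset, extendSet, Set.mem_ofPred_eq, Fin.snoc_castSucc]
      using removeAt_notMem_Fset hF j

/-- Let `χ ∈ W` have lowest index `m`. Then for every
`n ∈ {m+2, m+4, …}` (here `n = m + 2j + 2`), the function `χ_n` vanishes outside
`F_n × ℝ³`. -/
theorem statement4 (m : ℕ) (D : Set (Fin (m + 1) → R3)) (χ : FockRep)
    (h : IsW m D χ) (j : ℕ) (x : Fin (m + 2 * j + 3) → R3)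
    (hx : x ∉ Tset (m + 2 * j + 2)) :
    χ (m + 2 * j + 2) x = 0 := by
  obtain ⟨-, hFD, -, -, hbase, hstep, -, -⟩ := h
  induction j with
  | zero =>
    rw [show χ (m + 2 * 0 + 2) = _ from hbase]
    exact chiFormula_eq_zero_of_Fset_subset hFD _ hx
  | succ j ih =>
    rw [show χ (m + 2 * (j + 1) + 2) = _ from hstep j]
    exact chiFormula_eq_zero_of_eq_zero_off_Tset ∅ ih hx

end
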